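/- In the two-worker extended mechanism, the strategy profile in which each worker reports E regardless of type is an ex post equilibrium: for every type profile (θ_1, θ_2) ∈ {B,E}², every worker i, and every deviation report r ∈ {B,E,U}, the payoff of worker i (of type θ_i) when both workers report E is greater than or equal to the payoff when worker i reports r and the opponent reports E. However, this equilibrium is not in dominant strategies: reporting E is not weakly dominant for a worker of type B, since against an opponent reporting U, a type-B worker's payoff from reporting E is strictly less than the payoff from reporting B. -/
import Mathlib


/-- Worker types: beginner or expert. -/
inductive WorkerType | B | E
deriving DecidableEq

/-- Contracts: salary High/Low paired with task Mixed/Delicate/Perfunctory. -/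
inductive Contract | HM | HD | LM | LP
deriving DecidableEq

/-- A worker's payoff from a contract, given the worker's own type. -/
def payoff : Contract → WorkerType → ℝ
  | .HM, .E => 4
  | .HD, .E => 2
  | .LM, .E => 1
  | .LP, .E => 0
  | .HM, .B => 4
  | .HD, .B => 2
  | .LM, .B => 2
  | .LP, .B => 4

/-- The direct mechanism: a pair of reports ↦ (worker 1's contract, worker 2's contract). -/
def directPair : WorkerType → WorkerType → Contract × Contract
  | .B, .B => (.LM, .LM)
  | .B, .E => (.LP, .HD)
  | .E, .B => (.HD, .LP)
  | .E, .E => (.HM, .HM)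

/-- Contract assigned by the direct mechanism to worker `i` under report profile `r`. -/
def directM (r : Fin 2 → WorkerType) (i : Fin 2) : Contract :=
  if i = 0 then (directPair (r 0) (r 1)).1 else (directPair (r 0) (r 1)).2

/-- Reports in the extended mechanism: beginner, expert, or leave unanswered. -/
inductive Report | B | E | U
deriving DecidableEq

/-- The report naming a worker's type. -/
def toRep : WorkerType → Report
  | .B => .B
  | .E => .E

/-- The extended mechanism: a pair of reports ↦ (worker 1's contract, worker 2's contract). -/
def extPair : Report → Report → Contract × Contract
  | .B, .B => (.LM, .LM)
  | .B, .E => (.LP, .HD)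
  | .E, .B => (.HD, .LP)
  | .E, .E => (.HM, .HM)
  | .B, .U => (.LP, .HD)
  | .E, .U => (.HD, .LP)
  | .U, .B => (.HD, .LP)
  | .U, .E => (.LP, .HD)
  | .U, .U => (.LM, .LM)

/-- Contract assigned by the extended mechanism to worker `i` under report profile `r`. -/
def extM (r : Fin 2 → Report) (i : Fin 2) : Contract :=
  if i = 0 then (extPair (r 0) (r 1)).1 else (extPair (r 0) (r 1)).2

/-- In the extended mechanism the all-E profile is an ex post equilibrium, but it
is not in dominant strategies: reporting E is not weakly dominant for a type-B
worker, since against an opponent reporting U a beginner does strictly better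
reporting B than E. -/
theorem allE_expost_not_dominant_ext :
    -- all-E is an ex post equilibrium
    (∀ (θ : Fin 2 → WorkerType) (i : Fin 2) (r : Report),
      payoff (extM (fun _ => Report.E) i) (θ i) ≥
        payoff (extM (Function.update (fun _ => Report.E) i r) i) (θ i)) ∧
    -- reporting E is not weakly dominant for a type-B worker ...
    (∀ i : Fin 2,
      ¬ (∀ m : Fin 2 → Report,
          payoff (extM (Function.update m i Report.E) i) WorkerType.B ≥
            payoff (extM m i) WorkerType.B)) ∧
    -- ... since against an opponent reporting U, a beginner strictly prefers B to E
    (∀ i : Fin 2,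
      payoff (extM (Function.update (fun _ => Report.U) i Report.E) i) WorkerType.B <
        payoff (extM (Function.update (fun _ => Report.U) i Report.B) i) WorkerType.B) := by
  refine ⟨?_, ?_, ?_⟩
  · intro θ i r
    fin_cases i <;> cases h : θ _ <;> cases r <;>
      simp [extM, extPair, payoff, Function.update, h] <;> norm_num
  · intro i h
    have := h (fun j => if j = i then Report.B else Report.U)
    fin_cases i <;>
      simp [extM, extPair, payoff, Function.update] at this <;> norm_num at this
  · intro i
    fin_cases i <;>
      simp [extM, extPair, payoff, Function.update] <;> norm_num
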